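/- (Lemma 4.2) Let G be a countably infinite group, ν a multiorder on G, and J : Õ → ℝ a bounded Borel measurable function. Then for every j ∈ ℕ, ∫ J(g_≺(≺)) dν(≺) = ∫ J(≺) dν(≺), where for each ≺ ∈ Õ, g_≺ = bi_≺(j) and g_≺(≺) denotes the action of the group element g_≺ on the order ≺. -/

import Mathlib

open MeasureTheory
open scoped Classical

/-- An *order of type ℤ* on `G`. -/
def IsZOrder {G : Type*} (r : G → G → Prop) : Prop :=
  IsStrictTotalOrder G r ∧ (∀ a b : G, {g : G | r a g ∧ r g b}.Finite) ∧
    (∀ a : G, ∃ b, r b a) ∧ (∀ a : G, ∃ b, r a b)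

/-- The relation on `G` encoded by an element of `{0,1}^{G×G}`. -/
def relOf {G : Type*} (x : G × G → Bool) : G → G → Prop := fun a b => x (a, b) = true

/-- The set `Õ` of orders of type ℤ on `G`, as a subset of `{0,1}^{G×G}`. -/
def ZOrders (G : Type*) : Set (G × G → Bool) := {x | IsZOrder (relOf x)}

/-- The `G`-action on `{0,1}^{G×G}` corresponding to `a (g(≺)) b ⟺ ag ≺ bg`. -/
def actB {G : Type*} [Group G] (g : G) (x : G × G → Bool) : G × G → Bool :=
  fun p => x (p.1 * g, p.2 * g)

/-- `f : ℤ → G` is an anchored order isomorphism from `(ℤ,<)` to `(G,r)`. -/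
def IsAnchoredIso {G : Type*} [One G] (r : G → G → Prop) (f : ℤ → G) : Prop :=
  Function.Bijective f ∧ f 0 = 1 ∧ ∀ i j : ℤ, i < j ↔ r (f i) (f j)

/-- The anchored bijection `bi_≺ : ℤ → G` associated with an order of type ℤ. -/
noncomputable def biOf {G : Type*} [One G] (r : G → G → Prop) : ℤ → G :=
  if h : ∃ f : ℤ → G, IsAnchoredIso r f then h.choose else fun _ => 1

/-! The map `T ≺ = bi_≺(j)(≺)` is a bijection of `{0,1}^{G×G}`: translating `≺` by
`bi_≺(k)` shifts its anchored bijection by `k`, so `≺ ↦ bi_≺(-j)(≺)` inverts `T` (off `Õ` both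
maps are the identity). On each fibre `{bi_≺(j) = g}` the map `T` is the translation by `g`, and
since `T` is bijective the translated fibres `g • {bi_≺(j) = g}` partition the space again;
invariance of `ν` under each translation then gives `T_* ν = ν`. -/

open Function Set
open scoped Pointwise

section FiberwiseSMul
variable {G X : Type*} [Group G] [Countable G] [MulAction G X] [MeasurableSpace X]
  [MeasurableConstSMul G X] {β : X → G}

theorem measurable_fiberwise_smul (hβ : ∀ g, MeasurableSet (β ⁻¹' {g})) :
    Measurable fun x => β x • x := by
  intro A hA
  have : (fun x => β x • x) ⁻¹' A = ⋃ g : G, β ⁻¹' {g} ∩ (g • ·) ⁻¹' A := by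
    ext x; simp
  rw [this]
  exact .iUnion fun g => (hβ g).inter (measurable_const_smul g hA)

theorem map_fiberwise_smul_eq_self (ν : Measure X) [SMulInvariantMeasure G X ν]
    (hβ : ∀ g, MeasurableSet (β ⁻¹' {g})) (hT : Bijective fun x => β x • x) :
    ν.map (fun x => β x • x) = ν := by
  have hdisj : Pairwise (Disjoint on fun g => g • β ⁻¹' {g}) := by
    intro g h hgh
    refine Set.disjoint_left.2 ?_
    rintro _ ⟨x, rfl, rfl⟩ ⟨y, rfl, hxy⟩
    exact hgh (congrArg β (hT.1 hxy.symm))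
  have hcover : ⋃ g, g • β ⁻¹' {g} = univ := by
    refine eq_univ_of_forall fun y => ?_
    obtain ⟨x, rfl⟩ := hT.2 y
    exact mem_iUnion.2 ⟨β x, x, rfl, rfl⟩
  ext A hA
  rw [Measure.map_apply (measurable_fiberwise_smul hβ) hA]
  calc ν ((fun x => β x • x) ⁻¹' A)
      = ν (⋃ g : G, β ⁻¹' {g} ∩ g⁻¹ • A) := by
        congr 1; ext x; simp [Set.mem_smul_set_iff_inv_smul_mem]
    _ = ∑' g : G, ν (β ⁻¹' {g} ∩ g⁻¹ • A) :=
        measure_iUnion (fun g h hgh => (Disjoint.preimage β (by simpa using hgh)).mono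
          inter_subset_left inter_subset_left)
          fun g => (hβ g).inter (hA.const_smul _)
    _ = ∑' g : G, ν (g • β ⁻¹' {g} ∩ A) := by simp_rw [measure_inter_inv_smul]
    _ = ν (⋃ g : G, g • β ⁻¹' {g} ∩ A) :=
        (measure_iUnion (fun g h hgh => (hdisj hgh).mono inter_subset_left inter_subset_left)
          fun g => ((hβ g).const_smul g).inter hA).symm
    _ = ν A := by rw [← iUnion_inter, hcover, univ_inter]

end FiberwiseSMul

theorem Int.eq_id_of_strictMono_of_surjective {ψ : ℤ → ℤ} (hψ : StrictMono ψ)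
    (hs : Surjective ψ) (h0 : ψ 0 = 0) : ψ = id := by
  have hsucc (n : ℤ) : ψ (n + 1) = ψ n + 1 := by
    simpa [Order.succ_eq_add_one] using (hψ.orderIsoOfSurjective ψ hs).map_succ n
  funext n
  induction n using Int.induction_on with
  | zero => exact h0
  | succ i ih => rw [hsucc, ih]; rfl
  | pred i ih =>
    have := hsucc (-(i : ℤ) - 1)
    simp only [sub_add_cancel, ih, id] at this ⊢
    omega

theorem isZOrder_int_lt : IsZOrder ((· < ·) : ℤ → ℤ → Prop) :=
  ⟨inferInstance, fun a b => Set.finite_Ioo a b, fun a => ⟨a - 1, by omega⟩,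
    fun a => ⟨a + 1, by omega⟩⟩

theorem IsZOrder.invImage {G H : Type*} {r : G → G → Prop} (hr : IsZOrder r) (e : H ≃ G) :
    IsZOrder (InvImage r e) := by
  obtain ⟨hsto, hfin, hmin, hmax⟩ := hr
  have hsto' : IsStrictTotalOrder H (InvImage r e) :=
    { trichotomous := fun a b hab hba => e.injective (hsto.trichotomous _ _ hab hba)
      irrefl := fun a => hsto.irrefl (e a)
      trans := fun a b c => hsto.trans (e a) (e b) (e c) }
  refine ⟨hsto', fun a b => (hfin (e a) (e b)).preimage e.injective.injOn,
    fun a => ?_, fun a => ?_⟩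
  · obtain ⟨b, hb⟩ := hmin (e a)
    exact ⟨e.symm b, by simpa [InvImage] using hb⟩
  · obtain ⟨b, hb⟩ := hmax (e a)
    exact ⟨e.symm b, by simpa [InvImage] using hb⟩

namespace IsAnchoredIso
variable {G : Type*} [One G] {r : G → G → Prop} {f : ℤ → G}

theorem rel_iff (hf : IsAnchoredIso r f) (a b : G) :
    r a b ↔ (Equiv.ofBijective f hf.1).symm a < (Equiv.ofBijective f hf.1).symm b := by
  obtain ⟨i, rfl⟩ := hf.1.2 a
  obtain ⟨j, rfl⟩ := hf.1.2 b
  rw [← hf.2.2]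
  simp [Equiv.ofBijective_symm_apply_apply]

theorem isZOrder (hf : IsAnchoredIso r f) : IsZOrder r := by
  have : r = InvImage (· < ·) (Equiv.ofBijective f hf.1).symm := by
    funext a b; exact propext (hf.rel_iff a b)
  exact this ▸ isZOrder_int_lt.invImage _

theorem unique {f' : ℤ → G} (hf : IsAnchoredIso r f) (hf' : IsAnchoredIso r f') : f = f' := by
  set E := Equiv.ofBijective f hf.1
  have hψ : E.symm ∘ f' = id := by
    refine Int.eq_id_of_strictMono_of_surjective
      (fun i j hij => (hf.rel_iff _ _).1 ((hf'.2.2 i j).1 hij))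
      (E.symm.surjective.comp hf'.1.2) ?_
    simp [hf'.2.1, ← hf.2.1, E, Equiv.ofBijective_symm_apply_apply]
  funext n
  simpa [E] using (congrArg E (congrFun hψ n)).symm

theorem apply_add_one_eq_iff (hf : IsAnchoredIso r f) (k : ℤ) (g : G) :
    f (k + 1) = g ↔ r (f k) g ∧ ∀ h, ¬(r (f k) h ∧ r h g) := by
  obtain ⟨m, rfl⟩ := hf.1.2 g
  simp only [hf.1.1.eq_iff, ← hf.2.2, hf.1.2.forall]
  constructor
  · rintro rfl
    exact ⟨by omega, fun i => by omega⟩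
  · rintro ⟨hkm, hgap⟩
    by_contra
    exact hgap (k + 1) ⟨by omega, by omega⟩

end IsAnchoredIso

theorem IsZOrder.exists_isAnchoredIso {G : Type*} [One G] {r : G → G → Prop} (hr : IsZOrder r) :
    ∃ f : ℤ → G, IsAnchoredIso r f := by
  obtain ⟨hsto, hfin, hmin, hmax⟩ := hr
  let _ : LinearOrder G := linearOrderOfSTO r
  let _ : LocallyFiniteOrder G := LocallyFiniteOrder.ofFiniteIcc fun a b => by
    refine (((Set.finite_singleton b).insert a).union (hfin a b)).subset fun g hg => ?_
    rcases hg.1.eq_or_lt with h1 | h1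
    · exact Or.inl (Or.inl h1.symm)
    rcases hg.2.eq_or_lt with h2 | h2
    · exact Or.inl (Or.inr h2)
    exact Or.inr ⟨h1, h2⟩
  have : NoMinOrder G := ⟨hmin⟩
  have : NoMaxOrder G := ⟨hmax⟩
  have : Nonempty G := ⟨1⟩
  let _ : SuccOrder G := LinearLocallyFiniteOrder.succOrder G
  let _ : PredOrder G := LinearLocallyFiniteOrder.predOrder G
  let e : G ≃o ℤ := orderIsoIntOfLinearSuccPredArch
  refine ⟨fun i => e.symm (i + e 1), ?_, by simp, fun i k => ?_⟩
  · exact e.symm.bijective.comp (Equiv.addRight (e 1)).bijective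
  · exact (e.symm.lt_iff_lt.trans (by simp)).symm

section biOf
variable {G : Type*} [One G] {r : G → G → Prop} {f : ℤ → G}

theorem biOf_eq (hf : IsAnchoredIso r f) : biOf r = f := by
  have h : ∃ f : ℤ → G, IsAnchoredIso r f := ⟨f, hf⟩
  rw [biOf, dif_pos h]
  exact h.choose_spec.unique hf

theorem IsZOrder.isAnchoredIso_biOf (hr : IsZOrder r) : IsAnchoredIso r (biOf r) := by
  obtain ⟨f, hf⟩ := hr.exists_isAnchoredIso
  rwa [biOf_eq hf]

theorem biOf_of_not_isZOrder (hr : ¬IsZOrder r) : biOf r = fun _ => 1 :=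
  dif_neg fun ⟨_, hf⟩ => hr hf.isZOrder

end biOf

section Translation
variable {G : Type*} [Group G]

theorem actB_actB (g h : G) (x : G × G → Bool) : actB g (actB h x) = actB (g * h) x := by
  funext p; simp [actB, mul_assoc]

@[simp]
theorem actB_one (x : G × G → Bool) : actB (1 : G) x = x := by
  funext p; simp [actB]

theorem measurable_actB (g : G) : Measurable (actB g : (G × G → Bool) → G × G → Bool) :=
  measurable_pi_lambda _ fun _ => measurable_pi_apply _

abbrev actBMulAction (G : Type*) [Group G] : MulAction G (G × G → Bool) where
  smul := actB
  one_smul := actB_one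
  mul_smul g h x := (actB_actB g h x).symm

theorem IsAnchoredIso.translate {x : G × G → Bool} {f : ℤ → G}
    (hf : IsAnchoredIso (relOf x) f) (k : ℤ) :
    IsAnchoredIso (relOf (actB (f k) x)) fun i => f (i + k) * (f k)⁻¹ := by
  refine ⟨?_, by simp, fun i j => ?_⟩
  · exact (Equiv.mulRight (f k)⁻¹).bijective.comp (hf.1.comp (Equiv.addRight k).bijective)
  · change i < j ↔ relOf x (f (i + k) * (f k)⁻¹ * f k) (f (j + k) * (f k)⁻¹ * f k)
    rw [inv_mul_cancel_right, inv_mul_cancel_right, ← hf.2.2]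
    omega

theorem leftInverse_actB_biOf (k : ℤ) :
    LeftInverse (fun y : G × G → Bool => actB (biOf (relOf y) (-k)) y)
      fun x => actB (biOf (relOf x) k) x := by
  intro x
  by_cases hx : IsZOrder (relOf x)
  · have hf := hx.isAnchoredIso_biOf
    simp only [biOf_eq (hf.translate k), neg_add_cancel, hf.2.1, one_mul, actB_actB,
      inv_mul_cancel, actB_one]
  · simp [biOf_of_not_isZOrder hx]

theorem bijective_actB_biOf (k : ℤ) :
    Bijective fun x : G × G → Bool => actB (biOf (relOf x) k) x :=
  ⟨(leftInverse_actB_biOf k).injective, by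
    simpa using (leftInverse_actB_biOf (-k)).surjective⟩

end Translation

theorem isZOrder_iff {G : Type*} {r : G → G → Prop} : IsZOrder r ↔
    (∀ a b, ¬r a b → ¬r b a → a = b) ∧ (∀ a, ¬r a a) ∧
    (∀ a b c, r a b → r b c → r a c) ∧ (∀ a b, ∃ s : Finset G, ∀ g, r a g ∧ r g b → g ∈ s) ∧
    (∀ a, ∃ b, r b a) ∧ (∀ a, ∃ b, r a b) := by
  constructor
  · rintro ⟨hsto, hfin, hmin, hmax⟩
    exact ⟨hsto.trichotomous, hsto.irrefl, hsto.trans,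
      fun a b => ⟨(hfin a b).toFinset, fun g hg => (hfin a b).mem_toFinset.2 hg⟩, hmin, hmax⟩
  · rintro ⟨htri, hirr, htrans, hfin, hmin, hmax⟩
    refine ⟨{ trichotomous := htri, irrefl := hirr, trans := htrans }, fun a b => ?_,
      hmin, hmax⟩
    obtain ⟨s, hs⟩ := hfin a b
    exact s.finite_toSet.subset hs

@[fun_prop]
theorem measurable_relOf {G : Type*} (a b : G) :
    Measurable fun x : G × G → Bool => relOf x a b :=
  (measurable_pi_apply (a, b) : Measurable fun x : G × G → Bool => x (a, b)).eq_const true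

section Measurability
variable {G : Type*} [Countable G]

theorem measurable_isZOrder_relOf :
    Measurable fun x : G × G → Bool => IsZOrder (relOf x) := by
  simp only [isZOrder_iff]
  fun_prop

variable [One G]

theorem measurable_isZOrder_and_biOf_eq (n : ℕ) (g : G) :
    Measurable fun x : G × G → Bool => IsZOrder (relOf x) ∧ biOf (relOf x) n = g := by
  induction n generalizing g with
  | zero =>
    have : (fun x : G × G → Bool => IsZOrder (relOf x) ∧ biOf (relOf x) (0 : ℕ) = g) =
        fun x => IsZOrder (relOf x) ∧ g = 1 := by
      funext x
      exact propext <| and_congr_right fun hx => by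
        rw [Nat.cast_zero, hx.isAnchoredIso_biOf.2.1, eq_comm]
    rw [this]
    exact measurable_isZOrder_relOf.and measurable_const
  | succ n ih =>
    have : (fun x : G × G → Bool => IsZOrder (relOf x) ∧ biOf (relOf x) (n + 1 : ℕ) = g) =
        fun x => ∃ g', (IsZOrder (relOf x) ∧ biOf (relOf x) n = g') ∧
          relOf x g' g ∧ ∀ h, ¬(relOf x g' h ∧ relOf x h g) := by
      funext x
      refine propext ⟨?_, ?_⟩
      · rintro ⟨hx, rfl⟩
        exact ⟨_, ⟨hx, rfl⟩,
          (hx.isAnchoredIso_biOf.apply_add_one_eq_iff n _).1 (by push_cast; rfl)⟩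
      · rintro ⟨_, ⟨hx, rfl⟩, h⟩
        exact ⟨hx, by push_cast; exact (hx.isAnchoredIso_biOf.apply_add_one_eq_iff n g).2 h⟩
    rw [this]
    fun_prop

theorem measurableSet_biOf_preimage (n : ℕ) (g : G) :
    MeasurableSet ((fun x : G × G → Bool => biOf (relOf x) n) ⁻¹' {g}) := by
  have : (fun x : G × G → Bool => biOf (relOf x) n) ⁻¹' {g} =
      {x | (IsZOrder (relOf x) ∧ biOf (relOf x) n = g) ∨ (¬IsZOrder (relOf x) ∧ g = 1)} := by
    ext x
    by_cases hx : IsZOrder (relOf x) <;> simp [hx, biOf_of_not_isZOrder, eq_comm]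
  rw [this]
  exact ((measurable_isZOrder_and_biOf_eq n g).or
    (measurable_isZOrder_relOf.not.and measurable_const)).setOf

end Measurability

theorem integral_along_orbit_of_multiorder_general {G : Type*} [Group G] [Countable G]
    (ν : Measure (G × G → Bool))
    (hinv : ∀ g : G, Measure.map (actB g) ν = ν)
    (J : (G × G → Bool) → ℝ) (hJmeas : Measurable J) (j : ℕ) :
    ∫ x, J (actB (biOf (relOf x) (j : ℤ)) x) ∂ν = ∫ x, J x ∂ν := by
  let _ := actBMulAction G
  have : MeasurableConstSMul G (G × G → Bool) := ⟨measurable_actB⟩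
  have : SMulInvariantMeasure G (G × G → Bool) ν :=
    ((smulInvariantMeasure_tfae G ν).out 0 5).2 hinv
  have hβ := measurableSet_biOf_preimage (G := G) j
  calc ∫ x, J (actB (biOf (relOf x) j) x) ∂ν
      = ∫ y, J y ∂ν.map fun x => biOf (relOf x) j • x :=
        (integral_map (measurable_fiberwise_smul hβ).aemeasurable
          hJmeas.aestronglyMeasurable).symm
    _ = ∫ y, J y ∂ν := by rw [map_fiberwise_smul_eq_self ν hβ (bijective_actB_biOf j)]

/-- Lemma 4.2: for a multiorder `ν` on `G` and a bounded measurable `J : Õ → ℝ`,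
`∫ J(j^≺(≺)) dν(≺) = ∫ J(≺) dν(≺)` for every `j ∈ ℕ`, where `j^≺ = bi_≺(j)`. -/
theorem integral_along_orbit_of_multiorder {G : Type*} [Group G] [Countable G]
    [Infinite G] (ν : Measure (G × G → Bool)) [IsProbabilityMeasure ν]
    (hsupp : ν (ZOrders G) = 1)
    (hinv : ∀ g : G, Measure.map (actB g) ν = ν)
    (J : (G × G → Bool) → ℝ) (hJmeas : Measurable J)
    (C : ℝ) (hJbdd : ∀ x, |J x| ≤ C) (j : ℕ) :
    ∫ x, J (actB (biOf (relOf x) (j : ℤ)) x) ∂ν = ∫ x, J x ∂ν :=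
  integral_along_orbit_of_multiorder_general ν hinv J hJmeas j
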